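/- There exists L₀ such that for all L ≥ L₀ and all integers L ≤ k₁ < k₂, P(∃ i ∈ [k₁, k₂] such that ℰ(i,ℓ,L) occurs for some ℓ ≤ 10 log i) ≤ (k₂ − k₁) · exp(−L² k₁^{2α} / (4 d (10 log k₂)⁴ ζ(2)²)) + k₁^{−3}. -/

import Mathlib

open scoped ENNReal NNReal

/-- Index type for the jointly independent random choices: `inl i` indexes the
uniform parent choice of vertex `i`, `inr (i, k)` indexes the `k`-th coordinate
of the Gaussian displacement `D i`. -/
abbrev Idx (d : ℕ) := ℕ ⊕ (ℕ × Fin d)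

/-- Value type of each random choice. -/
def IdxType (d : ℕ) : Idx d → Type
  | .inl _ => ℕ
  | .inr _ => ℝ

instance instIdxType (d : ℕ) (x : Idx d) : MeasurableSpace (IdxType d x) := by
  cases x with
  | inl _ => exact (inferInstance : MeasurableSpace ℕ)
  | inr _ => exact (inferInstance : MeasurableSpace ℝ)

/-- The random cluster model in `ℝ^d` with standard deviations `σ_i = i^{-α}`:
`X 1 = 0`, and for `i ≥ 2`, `X i = X (pa i) + D i` where the parent `pa i` is
uniform on `{1, …, i-1}` and `D i` has `d` independent centered Gaussian
coordinates of variance `i^{-2α}`, all choices jointly independent.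
`lvl i` is the level of vertex `i` in the recursive tree. -/
structure Model (d : ℕ) (α : ℝ) where
  Ω : Type
  [mΩ : MeasurableSpace Ω]
  μ : MeasureTheory.Measure Ω
  prob : MeasureTheory.IsProbabilityMeasure μ
  pa : ℕ → Ω → ℕ
  D : ℕ → Ω → EuclideanSpace ℝ (Fin d)
  X : ℕ → Ω → EuclideanSpace ℝ (Fin d)
  lvl : ℕ → Ω → ℕ
  meas_pa : ∀ i, Measurable (pa i)
  meas_D : ∀ i, Measurable (D i)
  pa_mem : ∀ i, 2 ≤ i → ∀ ω, 1 ≤ pa i ω ∧ pa i ω < i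
  pa_unif : ∀ i, 2 ≤ i → ∀ j, 1 ≤ j → j < i → μ {ω | pa i ω = j} = (1 : ℝ≥0∞) / (i - 1 : ℕ)
  D_gauss : ∀ i, 2 ≤ i → ∀ k : Fin d,
    MeasureTheory.Measure.map (fun ω => D i ω k) μ
      = ProbabilityTheory.gaussianReal 0 ((i : ℝ≥0) ^ (-(2 * α)))
  indep : ProbabilityTheory.iIndepFun (m := instIdxType d)
    (fun x : Idx d => match x with
      | .inl i => pa i
      | .inr (i, k) => fun ω => D i ω k) μ
  X_one : ∀ ω, X 1 ω = 0
  X_rec : ∀ i, 2 ≤ i → ∀ ω, X i ω = X (pa i ω) ω + D i ω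
  lvl_one : ∀ ω, lvl 1 ω = 0
  lvl_rec : ∀ i, 2 ≤ i → ∀ ω, lvl i ω = lvl (pa i ω) ω + 1

open MeasureTheory ProbabilityTheory Real Filter Bornology

/-- `ζ(2) = π²/6`. -/
noncomputable def zeta2 : ℝ := Real.pi ^ 2 / 6

/-!
On the event, some `i ∈ [k₁, k₂]` has `‖D i‖ ≥ L / ((10 log k₂)² ζ(2))`, since `ℓ ≤ 10 log k₂`.
Each coordinate of `D i` is centred Gaussian with variance `i^{-2α} ≤ k₁^{-2α}`, so Chernoff
bounds and union bounds over the `d` coordinates and over `i` bound the probability by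
`(k₂ - k₁ + 1) · 2d · q²`, where `q = exp (-E)` is the exponential of the claim. If `4 d q ≤ 1`
this is at most `(k₂ - k₁) q`. Otherwise `E < log (4d)`; as `k₁^{2α}` eventually dominates
`(log k₁)⁴`, for `L₀` large this forces `k₂ - k₁ ≥ 4d`, and then `(k₂ - k₁) q ≥ 1`.
-/

open Finset

attribute [local instance] Model.prob

section SubgaussianTail

variable {Ω : Type*} {mΩ : MeasurableSpace Ω} {μ : Measure Ω}

lemma hasSubgaussianMGF_of_map_eq_gaussianReal {X : Ω → ℝ} {v : ℝ≥0} (hX : AEMeasurable X μ)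
    (h : μ.map X = gaussianReal 0 v) : HasSubgaussianMGF X v μ := by
  rw [← HasSubgaussianMGF.id_map_iff hX, h]
  exact ⟨integrable_exp_mul_gaussianReal, fun t => by simp [mgf_id_gaussianReal]⟩

lemma ProbabilityTheory.HasSubgaussianMGF.measureReal_le_abs_le [IsFiniteMeasure μ]
    {X : Ω → ℝ} {c : ℝ≥0} (h : HasSubgaussianMGF X c μ) {ε : ℝ} (hε : 0 ≤ ε) :
    μ.real {ω | ε ≤ |X ω|} ≤ 2 * exp (-ε ^ 2 / (2 * c)) := by
  have hsplit : {ω | ε ≤ |X ω|} = {ω | ε ≤ X ω} ∪ {ω | ε ≤ (-X) ω} := by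
    ext ω
    simp [le_abs]
  rw [hsplit]
  linarith [measureReal_union_le (μ := μ) {ω | ε ≤ X ω} {ω | ε ≤ (-X) ω},
    h.measure_ge_le hε, h.neg.measure_ge_le hε]

lemma EuclideanSpace.exists_div_sqrt_card_le_abs {ι : Type*} [Fintype ι] [Nonempty ι]
    (x : EuclideanSpace ℝ ι) {s : ℝ} (h : s ≤ ‖x‖) :
    ∃ k, s / √(Fintype.card ι) ≤ |x k| := by
  obtain ⟨k, hk⟩ := Finite.exists_max fun j => |x j|
  refine ⟨k, (div_le_iff₀ (by positivity)).2 (h.trans ?_)⟩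
  calc ‖x‖ = √(∑ j, |x j| ^ 2) := by simp [EuclideanSpace.norm_eq]
    _ ≤ √(∑ _j : ι, |x k| ^ 2) :=
      sqrt_le_sqrt (sum_le_sum fun j _ => pow_le_pow_left₀ (abs_nonneg _) (hk j) 2)
    _ = |x k| * √(Fintype.card ι) := by
      rw [sum_const, card_univ, nsmul_eq_mul, Real.sqrt_mul (by positivity),
        sqrt_sq (abs_nonneg _), mul_comm]

lemma measureReal_le_norm_le_of_hasSubgaussianMGF [IsFiniteMeasure μ] {ι : Type*} [Fintype ι]
    [Nonempty ι] {V : Ω → EuclideanSpace ℝ ι} {c : ℝ≥0}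
    (hV : ∀ k, HasSubgaussianMGF (fun ω => V ω k) c μ) {s : ℝ} (hs : 0 ≤ s) :
    μ.real {ω | s ≤ ‖V ω‖} ≤
      2 * Fintype.card ι * exp (-s ^ 2 / (2 * Fintype.card ι * c)) := by
  calc μ.real {ω | s ≤ ‖V ω‖} ≤ μ.real (⋃ k, {ω | s / √(Fintype.card ι) ≤ |V ω k|}) :=
        measureReal_mono fun ω hω =>
          Set.mem_iUnion.2 (EuclideanSpace.exists_div_sqrt_card_le_abs _ hω)
    _ ≤ ∑ k, μ.real {ω | s / √(Fintype.card ι) ≤ |V ω k|} := measureReal_iUnion_fintype_le _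
    _ ≤ ∑ _k : ι, 2 * exp (-(s / √(Fintype.card ι)) ^ 2 / (2 * c)) :=
        sum_le_sum fun k _ => (hV k).measureReal_le_abs_le (by positivity)
    _ = 2 * Fintype.card ι * exp (-s ^ 2 / (2 * Fintype.card ι * c)) := by
      rw [sum_const, card_univ, nsmul_eq_mul, div_pow, sq_sqrt (by positivity), neg_div, neg_div,
        div_div]
      ring_nf

end SubgaussianTail

lemma eventually_const_mul_log_pow_le_rpow (C : ℝ) (n : ℕ) {r : ℝ} (hr : 0 < r) :
    ∀ᶠ x in atTop, C * log x ^ n ≤ x ^ r := by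
  filter_upwards [((isLittleO_log_rpow_rpow_atTop n hr).const_mul_left C).bound one_pos,
    eventually_ge_atTop 0] with x hx hx₀
  rw [rpow_natCast, one_mul, norm_of_nonneg (rpow_nonneg hx₀ r)] at hx
  exact (le_abs_self _).trans hx

lemma le_mul_of_le_one_of_le_mul_sq {p n c q : ℝ} (hp₁ : p ≤ 1)
    (hp : p ≤ (n + 1) * (2 * c * q ^ 2)) (hn : 1 ≤ n) (hc : 0 ≤ c) (hq : 0 ≤ q)
    (h : 4 * c * q ≤ 1 ∨ 4 * c ≤ n) : p ≤ n * q := by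
  by_cases hcq : 4 * c * q ≤ 1
  · nlinarith [mul_nonneg (sub_nonneg.2 hn) (mul_nonneg hc (sq_nonneg q)),
      mul_nonneg (mul_nonneg (zero_le_one.trans hn) hq) (sub_nonneg.2 hcq)]
  · nlinarith [h.resolve_left hcq]

lemma zeta2_pos : 0 < zeta2 := by
  unfold zeta2
  positivity

noncomputable def rangeExponent (d : ℕ) (α L : ℝ) (k₁ k₂ : ℕ) : ℝ :=
  L ^ 2 * (k₁ : ℝ) ^ (2 * α) / (4 * d * (10 * log k₂) ^ 4 * zeta2 ^ 2)

lemma four_mul_exp_neg_rangeExponent_le_one {d : ℕ} (hd : 1 ≤ d) {α L : ℝ} (hL : 1 ≤ L)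
    {k₁ k₂ : ℕ} (hk₂ : 1 < k₂) (hk₁₂ : k₂ ≤ k₁ ^ 2)
    (hk₁ : 16 * (4 * d * 10 ^ 4 * zeta2 ^ 2 * log (4 * d)) * log k₁ ^ 4 ≤ (k₁ : ℝ) ^ (2 * α)) :
    4 * d * exp (-rangeExponent d α L k₁ k₂) ≤ 1 := by
  have hζ := zeta2_pos
  have hd₁ : (1 : ℝ) ≤ d := by exact_mod_cast hd
  have hlog₂ : 0 < log k₂ := log_pos (by exact_mod_cast hk₂)
  have hlog₄ : 0 < log (4 * d) := log_pos (by linarith)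
  have hlog : log k₂ ≤ 2 * log k₁ := by
    calc log k₂ ≤ log ((k₁ : ℝ) ^ 2) := log_le_log (by positivity) (by exact_mod_cast hk₁₂)
      _ = 2 * log k₁ := by rw [Real.log_pow]; norm_num
  have hE : log (4 * d) ≤ rangeExponent d α L k₁ k₂ := by
    rw [rangeExponent, le_div_iff₀ (by positivity)]
    calc log (4 * d) * (4 * d * (10 * log k₂) ^ 4 * zeta2 ^ 2)
        = 4 * d * 10 ^ 4 * zeta2 ^ 2 * log (4 * d) * log k₂ ^ 4 := by ring
      _ ≤ 4 * d * 10 ^ 4 * zeta2 ^ 2 * log (4 * d) * (2 * log k₁) ^ 4 := by gcongr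
      _ = 16 * (4 * d * 10 ^ 4 * zeta2 ^ 2 * log (4 * d)) * log k₁ ^ 4 := by ring
      _ ≤ (k₁ : ℝ) ^ (2 * α) := hk₁
      _ ≤ L ^ 2 * (k₁ : ℝ) ^ (2 * α) := le_mul_of_one_le_left (by positivity) (by nlinarith)
  rw [← exp_log (by positivity : (0 : ℝ) < 4 * d), ← exp_add, exp_le_one_iff]
  linarith

namespace Model

variable {d : ℕ} {α : ℝ} (M : Model d α)

/-- The union of the events `ℰ(i, ℓ, L)` over `k₁ ≤ i ≤ k₂` and `1 ≤ ℓ ≤ 10 log i`. -/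
def rangeEvent (L : ℝ) (k₁ k₂ : ℕ) : Set M.Ω :=
  {ω | ∃ i : ℕ, k₁ ≤ i ∧ i ≤ k₂ ∧ ∃ ℓ : ℕ, 1 ≤ ℓ ∧ (ℓ : ℝ) ≤ 10 * log i ∧
    M.lvl i ω = ℓ ∧ L / ((ℓ : ℝ) ^ 2 * zeta2) ≤ ‖M.D i ω‖}

lemma rangeEvent_subset {L : ℝ} (hL : 0 ≤ L) {k₁ k₂ : ℕ} (hk₁ : 1 ≤ k₁) :
    M.rangeEvent L k₁ k₂ ⊆ {ω | ∃ i ∈ Icc k₁ k₂, L / ((10 * log k₂) ^ 2 * zeta2) ≤ ‖M.D i ω‖} := by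
  rintro ω ⟨i, hk₁i, hik₂, ℓ, hℓ, hℓi, -, hD⟩
  refine ⟨i, mem_Icc.2 ⟨hk₁i, hik₂⟩, le_trans ?_ hD⟩
  have hℓ₁ : (1 : ℝ) ≤ ℓ := by exact_mod_cast hℓ
  have hi : (1 : ℝ) ≤ i := by exact_mod_cast hk₁.trans hk₁i
  have hlog : log i ≤ log k₂ := log_le_log (by linarith) (by exact_mod_cast hik₂)
  have hζ := zeta2_pos
  gcongr
  linarith

lemma hasSubgaussianMGF_D {i : ℕ} (hi : 2 ≤ i) (k : Fin d) :
    HasSubgaussianMGF (fun ω => M.D i ω k) ((i : ℝ≥0) ^ (-(2 * α))) M.μ :=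
  hasSubgaussianMGF_of_map_eq_gaussianReal
    ((EuclideanSpace.proj k).continuous.measurable.comp (M.meas_D i)).aemeasurable
    (M.D_gauss i hi k)

lemma measureReal_le_norm_D_le [NeZero d] {i : ℕ} (hi : 2 ≤ i) {s : ℝ} (hs : 0 ≤ s) :
    M.μ.real {ω | s ≤ ‖M.D i ω‖} ≤ 2 * d * exp (-(s ^ 2 * (i : ℝ) ^ (2 * α)) / (2 * d)) := by
  refine (measureReal_le_norm_le_of_hasSubgaussianMGF (M.hasSubgaussianMGF_D hi) hs).trans_eq ?_
  have hi₀ : (0 : ℝ) < i := by positivity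
  rw [Fintype.card_fin, NNReal.coe_rpow, NNReal.coe_natCast, rpow_neg hi₀.le]
  field_simp

lemma measureReal_exists_le_norm_D_le [NeZero d] (hα : 0 ≤ α) {k₁ k₂ : ℕ} (hk₁ : 2 ≤ k₁)
    {s : ℝ} (hs : 0 ≤ s) :
    M.μ.real {ω | ∃ i ∈ Icc k₁ k₂, s ≤ ‖M.D i ω‖} ≤
      (k₂ + 1 - k₁ : ℕ) * (2 * d * exp (-(s ^ 2 * (k₁ : ℝ) ^ (2 * α)) / (2 * d))) := by
  have hunion : {ω | ∃ i ∈ Icc k₁ k₂, s ≤ ‖M.D i ω‖} = ⋃ i ∈ Icc k₁ k₂, {ω | s ≤ ‖M.D i ω‖} := by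
    ext ω
    simp
  rw [hunion, ← Nat.card_Icc, ← nsmul_eq_mul, ← sum_const]
  refine (measureReal_biUnion_finset_le _ _).trans (sum_le_sum fun i hi => ?_)
  obtain ⟨hk₁i, -⟩ := mem_Icc.1 hi
  refine (M.measureReal_le_norm_D_le (hk₁.trans hk₁i) hs).trans ?_
  gcongr

lemma measureReal_rangeEvent_le [NeZero d] (hα : 0 ≤ α) {L : ℝ} (hL : 0 ≤ L) {k₁ k₂ : ℕ}
    (hk₁ : 2 ≤ k₁) (hk : k₁ < k₂) :
    M.μ.real (M.rangeEvent L k₁ k₂) ≤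
      ((k₂ : ℝ) - k₁ + 1) * (2 * d * exp (-rangeExponent d α L k₁ k₂) ^ 2) := by
  have hζ := zeta2_pos
  have hlog₂ : 0 < log k₂ := log_pos (by exact_mod_cast (by omega : 1 < k₂))
  set t := L / ((10 * log k₂) ^ 2 * zeta2)
  have hexp : exp (-(t ^ 2 * (k₁ : ℝ) ^ (2 * α)) / (2 * d)) =
      exp (-rangeExponent d α L k₁ k₂) ^ 2 := by
    rw [← exp_nat_mul, rangeExponent]
    congr 1
    simp only [t]
    field_simp
    ring
  calc M.μ.real (M.rangeEvent L k₁ k₂) ≤ M.μ.real {ω | ∃ i ∈ Icc k₁ k₂, t ≤ ‖M.D i ω‖} :=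
        measureReal_mono (M.rangeEvent_subset hL (by omega))
    _ ≤ (k₂ + 1 - k₁ : ℕ) * (2 * d * exp (-(t ^ 2 * (k₁ : ℝ) ^ (2 * α)) / (2 * d))) :=
        M.measureReal_exists_le_norm_D_le hα hk₁ (by positivity)
    _ = _ := by
      rw [hexp, Nat.cast_sub (by omega)]
      push_cast
      ring

end Model

/-- There exists `L₀` such that for all `L ≥ L₀` and all integers `L ≤ k₁ < k₂`,
the probability that some `i ∈ [k₁, k₂]` realizes the event `ℰ(i, ℓ, L)` for some
level `ℓ ≤ 10 log i` is at most
`(k₂ - k₁) exp(-L² k₁^{2α} / (4 d (10 log k₂)⁴ ζ(2)²)) + k₁^{-3}`. -/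
theorem events_E_range_bound (d : ℕ) (hd : 2 ≤ d) (α : ℝ) (hα : 0 < α) (M : Model d α) :
    ∃ L₀ : ℝ, ∀ L : ℝ, L₀ ≤ L → ∀ k₁ k₂ : ℕ, L ≤ (k₁ : ℝ) → k₁ < k₂ →
      M.μ {ω | ∃ i : ℕ, k₁ ≤ i ∧ i ≤ k₂ ∧ ∃ ℓ : ℕ, 1 ≤ ℓ ∧ (ℓ : ℝ) ≤ 10 * Real.log i ∧
            M.lvl i ω = ℓ ∧ L / ((ℓ : ℝ) ^ 2 * zeta2) ≤ ‖M.D i ω‖} ≤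
        ENNReal.ofReal
          (((k₂ : ℝ) - (k₁ : ℝ)) *
              Real.exp (-(L ^ 2 * (k₁ : ℝ) ^ (2 * α)) /
                (4 * d * (10 * Real.log k₂) ^ 4 * zeta2 ^ 2)) +
            (k₁ : ℝ) ^ (-(3 : ℝ))) := by
  have : NeZero d := ⟨by omega⟩
  have hd₂ : (2 : ℝ) ≤ d := by exact_mod_cast hd
  obtain ⟨L₀, hL₀⟩ := eventually_atTop.1 <| eventually_const_mul_log_pow_le_rpow
    (16 * (4 * d * 10 ^ 4 * zeta2 ^ 2 * log (4 * d))) 4 (by positivity : 0 < 2 * α)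
  refine ⟨max L₀ (4 * d), fun L hL k₁ k₂ hLk₁ hk => ?_⟩
  obtain ⟨hL₀L, hdL⟩ := max_le_iff.1 hL
  have hk₁ : (4 * d : ℝ) ≤ k₁ := hdL.trans hLk₁
  have hk₂ : (k₁ : ℝ) + 1 ≤ k₂ := by exact_mod_cast hk
  have hdichotomy : 4 * d * exp (-rangeExponent d α L k₁ k₂) ≤ 1 ∨ 4 * d ≤ (k₂ : ℝ) - k₁ := by
    refine (lt_or_ge _ _).imp (fun hnear => ?_) id
    refine four_mul_exp_neg_rangeExponent_le_one (by omega) (by linarith)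
      (by exact_mod_cast (by linarith : (1 : ℝ) < k₂)) ?_ (hL₀ k₁ (hL₀L.trans hLk₁))
    exact_mod_cast (by nlinarith : (k₂ : ℝ) ≤ k₁ ^ 2)
  rw [← ofReal_measureReal, neg_div]
  refine ENNReal.ofReal_le_ofReal (le_add_of_le_of_nonneg ?_ (by positivity))
  have hk₁_two : 2 ≤ k₁ := by exact_mod_cast (by linarith : (2 : ℝ) ≤ k₁)
  exact le_mul_of_le_one_of_le_mul_sq measureReal_le_one
    (M.measureReal_rangeEvent_le hα.le (by linarith) hk₁_two hk) (by linarith) (by positivity)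
    (by positivity) hdichotomy
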